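/- The union of two strongly admissible labellings is strongly admissible: if Lab1 and Lab2 are strongly admissible labellings of the same framework, then the labelling Lab with in(Lab) = in(Lab1) ∪ in(Lab2), out(Lab) = out(Lab1) ∪ out(Lab2), and all other arguments undec, is a well-defined strongly admissible labelling. -/

import Mathlib

inductive Label where
  | inn | out | und
deriving DecidableEq

/-- A labelling is admissible if every in-labelled argument has all its attackers
labelled out, and every out-labelled argument has at least one in-labelled attacker. -/
def Admissible {Ar : Type*} (att : Ar → Ar → Prop) (L : Ar → Label) : Prop :=
  (∀ x, L x = Label.inn → ∀ y, att y x → L y = Label.out) ∧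
  (∀ x, L x = Label.out → ∃ y, att y x ∧ L y = Label.inn)

/-- A min-max numbering (with only natural-number values): in-arguments are numbered
1 + max of the numbers of their out-labelled attackers (max ∅ = 0), and out-arguments
1 + min of the numbers of their in-labelled attackers. -/
def IsMinMax {Ar : Type*} (att : Ar → Ar → Prop) (L : Ar → Label) (MM : Ar → ℕ) : Prop :=
  (∀ x, L x = Label.inn → MM x = sSup (MM '' {y | att y x ∧ L y = Label.out}) + 1) ∧
  (∀ x, L x = Label.out → MM x = sInf (MM '' {y | att y x ∧ L y = Label.inn}) + 1)

/-- Strongly admissible: admissible and admitting a min-max numbering with only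
natural-number (finite) values. -/
def StronglyAdmissible {Ar : Type*} (att : Ar → Ar → Prop) (L : Ar → Label) : Prop :=
  Admissible att L ∧ ∃ MM : Ar → ℕ, IsMinMax att L MM

/-- Complete labelling: admissible, and every undec argument has an undec attacker
and no in-labelled attacker. -/
def CompleteLab {Ar : Type*} (att : Ar → Ar → Prop) (L : Ar → Label) : Prop :=
  Admissible att L ∧
  ∀ x, L x = Label.und →
    (∃ y, att y x ∧ L y = Label.und) ∧ ∀ y, att y x → L y ≠ Label.inn

/-- The order on labellings: Lab1 ⊑ Lab2 iff in(Lab1) ⊆ in(Lab2) and out(Lab1) ⊆ out(Lab2). -/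
def LabLe {Ar : Type*} (L1 L2 : Ar → Label) : Prop :=
  (∀ x, L1 x = Label.inn → L2 x = Label.inn) ∧
  (∀ x, L1 x = Label.out → L2 x = Label.out)


lemma enat_sSup_image {Ar : Type*} [Fintype Ar] (g : Ar → ℕ∞) (S : Set Ar)
    (hg : ∀ y ∈ S, g y ≠ ⊤) :
    sSup (g '' S) = ((sSup ((fun y => (g y).toNat) '' S) : ℕ) : ℕ∞) := by
  rcases S.eq_empty_or_nonempty with h | h
  · simp [h]
  · set T := (fun y => (g y).toNat) '' S with hT
    have hTne : T.Nonempty := h.image _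
    have hTbdd : BddAbove T := (S.toFinite.image _).bddAbove
    obtain ⟨y0, hy0, hy0e⟩ := Nat.sSup_mem hTne hTbdd
    apply le_antisymm
    · apply sSup_le
      rintro v ⟨y, hy, rfl⟩
      rw [← ENat.coe_toNat (hg y hy)]
      exact_mod_cast le_csSup hTbdd ⟨y, hy, rfl⟩
    · calc ((sSup T : ℕ) : ℕ∞) = ((g y0).toNat : ℕ∞) := by rw [show (g y0).toNat = sSup T from hy0e]
        _ = g y0 := ENat.coe_toNat (hg y0 hy0)
        _ ≤ sSup (g '' S) := le_sSup ⟨y0, hy0, rfl⟩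

lemma enat_sInf_image {Ar : Type*} (g : Ar → ℕ∞) (S : Set Ar)
    (hS : S.Nonempty) (hg : ∀ y ∈ S, g y ≠ ⊤) :
    sInf (g '' S) = ((sInf ((fun y => (g y).toNat) '' S) : ℕ) : ℕ∞) := by
  set T := (fun y => (g y).toNat) '' S with hT
  have hTne : T.Nonempty := hS.image _
  obtain ⟨y0, hy0, hy0e⟩ := Nat.sInf_mem hTne
  apply le_antisymm
  · calc sInf (g '' S) ≤ g y0 := sInf_le ⟨y0, hy0, rfl⟩
      _ = ((g y0).toNat : ℕ∞) := (ENat.coe_toNat (hg y0 hy0)).symm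
      _ = ((sInf T : ℕ) : ℕ∞) := by rw [show (g y0).toNat = sInf T from hy0e]
  · apply le_sInf
    rintro v ⟨y, hy, rfl⟩
    have hmem : (g y).toNat ∈ T := ⟨y, hy, rfl⟩
    rw [← ENat.coe_toNat (hg y hy)]
    exact_mod_cast Nat.sInf_le hmem

lemma no_conflict_aux {Ar : Type*} [Fintype Ar] (att : Ar → Ar → Prop)
    (Lab1 Lab2 : Ar → Label) (MM1 MM2 : Ar → ℕ)
    (had1 : Admissible att Lab1) (had2 : Admissible att Lab2)
    (hmm1 : IsMinMax att Lab1 MM1) (hmm2 : IsMinMax att Lab2 MM2) :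
    ∀ n x, MM2 x < n →
      ¬(Lab1 x = Label.inn ∧ Lab2 x = Label.out) ∧
      ¬(Lab1 x = Label.out ∧ Lab2 x = Label.inn) := by
  intro n
  induction n with
  | zero => intro x hx; omega
  | succ n ih =>
    intro x hx
    constructor
    · rintro ⟨hx1, hx2⟩
      obtain ⟨y, hyatt, hyin⟩ := had2.2 x hx2
      have hTne : (MM2 '' {y | att y x ∧ Lab2 y = Label.inn}).Nonempty :=
        ⟨_, ⟨y, ⟨hyatt, hyin⟩, rfl⟩⟩
      obtain ⟨y0, hy0, hy0e⟩ := Nat.sInf_mem hTne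
      have hlt : MM2 y0 < n := by
        have := hmm2.2 x hx2
        omega
      exact (ih y0 (by omega)).2 ⟨had1.1 x hx1 y0 hy0.1, hy0.2⟩
    · rintro ⟨hx1, hx2⟩
      obtain ⟨z, hzatt, hzin⟩ := had1.2 x hx1
      have hzout : Lab2 z = Label.out := had2.1 x hx2 z hzatt
      have hmem : MM2 z ∈ MM2 '' {y | att y x ∧ Lab2 y = Label.out} :=
        ⟨z, ⟨hzatt, hzout⟩, rfl⟩
      have hbdd : BddAbove (MM2 '' {y | att y x ∧ Lab2 y = Label.out}) :=
        ((Set.toFinite _).image MM2).bddAbove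
      have hle := le_csSup hbdd hmem
      have := hmm2.1 x hx2
      exact (ih z (by omega)).1 ⟨hzin, hzout⟩

lemma prefix_aux {Ar : Type*} [Fintype Ar] (att : Ar → Ar → Prop)
    (Labi Lab : Ar → Label) (MMi : Ar → ℕ)
    (hadi : Admissible att Labi) (hmmi : IsMinMax att Labi MMi)
    (hsub : LabLe Labi Lab) (f : Ar → ℕ∞)
    (hfi : ∀ y, Labi y ≠ Label.und → f y ≤ (MMi y : ℕ∞)) (x : Ar) :
    (Lab x = Label.inn → Labi x = Label.inn →
      sSup (f '' {y | att y x ∧ Lab y = Label.out}) + 1 ≤ (MMi x : ℕ∞)) ∧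
    (Lab x = Label.out → Labi x = Label.out →
      sInf (f '' {y | att y x ∧ Lab y = Label.inn}) + 1 ≤ (MMi x : ℕ∞)) := by
  constructor
  · intro hx hxi
    have hmx := hmmi.1 x hxi
    have hstep : sSup (f '' {y | att y x ∧ Lab y = Label.out})
        ≤ ((sSup (MMi '' {y | att y x ∧ Labi y = Label.out}) : ℕ) : ℕ∞) := by
      apply sSup_le
      rintro v ⟨y, ⟨hya, _⟩, rfl⟩
      have hyi : Labi y = Label.out := hadi.1 x hxi y hya
      have h1 : f y ≤ (MMi y : ℕ∞) := hfi y (by simp [hyi])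
      have h2 : MMi y ≤ sSup (MMi '' {y | att y x ∧ Labi y = Label.out}) :=
        le_csSup (((Set.toFinite _).image MMi).bddAbove) ⟨y, ⟨hya, hyi⟩, rfl⟩
      exact h1.trans (by exact_mod_cast h2)
    calc sSup (f '' {y | att y x ∧ Lab y = Label.out}) + 1
        ≤ ((sSup (MMi '' {y | att y x ∧ Labi y = Label.out}) : ℕ) : ℕ∞) + 1 :=
          add_le_add_left hstep 1
      _ = ((sSup (MMi '' {y | att y x ∧ Labi y = Label.out}) + 1 : ℕ) : ℕ∞) := by push_cast; ring
      _ = (MMi x : ℕ∞) := by rw [← hmx]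
  · intro hx hxi
    have hmx := hmmi.2 x hxi
    obtain ⟨y, hya, hyi⟩ := hadi.2 x hxi
    have hTne : (MMi '' {y | att y x ∧ Labi y = Label.inn}).Nonempty :=
      ⟨_, ⟨y, ⟨hya, hyi⟩, rfl⟩⟩
    obtain ⟨y0, hy0, hy0e⟩ := Nat.sInf_mem hTne
    have h1 : f y0 ≤ (MMi y0 : ℕ∞) := hfi y0 (by simp [hy0.2])
    have h2 : sInf (f '' {y | att y x ∧ Lab y = Label.inn}) ≤ f y0 :=
      sInf_le ⟨y0, ⟨hy0.1, hsub.1 y0 hy0.2⟩, rfl⟩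
    calc sInf (f '' {y | att y x ∧ Lab y = Label.inn}) + 1
        ≤ (MMi y0 : ℕ∞) + 1 := add_le_add_left (h2.trans h1) 1
      _ = ((MMi y0 + 1 : ℕ) : ℕ∞) := by push_cast; ring
      _ = (MMi x : ℕ∞) := by
          rw [hmx, show MMi y0 = sInf (MMi '' {y | att y x ∧ Labi y = Label.inn}) from hy0e]

/-- The union of two strongly admissible labellings is well-defined and
strongly admissible. -/
theorem union_stronglyAdmissible
    {Ar : Type*} [Fintype Ar] (att : Ar → Ar → Prop) (Lab1 Lab2 : Ar → Label)
    (h1 : StronglyAdmissible att Lab1) (h2 : StronglyAdmissible att Lab2)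
    (Lab : Ar → Label)
    (hin : ∀ x, Lab x = Label.inn ↔ (Lab1 x = Label.inn ∨ Lab2 x = Label.inn))
    (hout : ∀ x, Lab x = Label.out ↔ (Lab1 x = Label.out ∨ Lab2 x = Label.out)) :
    (∀ x, ¬ (Lab1 x = Label.inn ∧ Lab2 x = Label.out)) ∧
    (∀ x, ¬ (Lab1 x = Label.out ∧ Lab2 x = Label.inn)) ∧
    StronglyAdmissible att Lab := by
  classical
  obtain ⟨had1, MM1, hmm1⟩ := h1
  obtain ⟨had2, MM2, hmm2⟩ := h2
  have hnc := fun x => no_conflict_aux att Lab1 Lab2 MM1 MM2 had1 had2 hmm1 hmm2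
    (MM2 x + 1) x (Nat.lt_succ_self _)
  have hadm : Admissible att Lab := by
    constructor
    · intro x hx y hy
      rcases (hin x).1 hx with h | h
      · exact (hout y).2 (Or.inl (had1.1 x h y hy))
      · exact (hout y).2 (Or.inr (had2.1 x h y hy))
    · intro x hx
      rcases (hout x).1 hx with h | h
      · obtain ⟨y, hya, hyi⟩ := had1.2 x h
        exact ⟨y, hya, (hin y).2 (Or.inl hyi)⟩
      · obtain ⟨y, hya, hyi⟩ := had2.2 x h
        exact ⟨y, hya, (hin y).2 (Or.inr hyi)⟩
  refine ⟨fun x => (hnc x).1, fun x => (hnc x).2, hadm, ?_⟩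
  have hsub1 : LabLe Lab1 Lab :=
    ⟨fun x h => (hin x).2 (Or.inl h), fun x h => (hout x).2 (Or.inl h)⟩
  have hsub2 : LabLe Lab2 Lab :=
    ⟨fun x h => (hin x).2 (Or.inr h), fun x h => (hout x).2 (Or.inr h)⟩
  set f : Ar → ℕ∞ := fun x =>
    min (if Lab1 x = Label.und then ⊤ else (MM1 x : ℕ∞))
        (if Lab2 x = Label.und then ⊤ else (MM2 x : ℕ∞)) with hfdef
  have hf1 : ∀ y, Lab1 y ≠ Label.und → f y ≤ (MM1 y : ℕ∞) := by
    intro y hy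
    rw [hfdef]
    simp only [if_neg hy]
    exact min_le_left _ _
  have hf2 : ∀ y, Lab2 y ≠ Label.und → f y ≤ (MM2 y : ℕ∞) := by
    intro y hy
    rw [hfdef]
    simp only [if_neg hy]
    exact min_le_right _ _
  let F : (Ar → ℕ∞) →o (Ar → ℕ∞) :=
    ⟨fun g x => if Lab x = Label.inn then sSup (g '' {y | att y x ∧ Lab y = Label.out}) + 1
      else if Lab x = Label.out then sInf (g '' {y | att y x ∧ Lab y = Label.inn}) + 1
      else 0, by
      intro g h hgh x
      dsimp only
      split_ifs
      · refine add_le_add_left ?_ 1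
        apply sSup_le
        rintro v ⟨y, hy, rfl⟩
        exact le_trans (hgh y) (le_sSup ⟨y, hy, rfl⟩)
      · refine add_le_add_left ?_ 1
        apply le_sInf
        rintro v ⟨y, hy, rfl⟩
        exact le_trans (sInf_le ⟨y, hy, rfl⟩) (hgh y)
      · exact le_refl _⟩
  have hFapp : ∀ (g : Ar → ℕ∞) (x : Ar), F g x =
      if Lab x = Label.inn then sSup (g '' {y | att y x ∧ Lab y = Label.out}) + 1
      else if Lab x = Label.out then sInf (g '' {y | att y x ∧ Lab y = Label.inn}) + 1
      else 0 := fun g x => rfl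
  have hpre : F f ≤ f := by
    intro x
    rw [hFapp]
    cases hl : Lab x with
    | und => rw [if_neg (by decide), if_neg (by decide)]; exact zero_le
    | inn =>
      rw [if_pos rfl, hfdef]
      apply le_min
      · cases hl1 : Lab1 x with
        | und => simp [hl1]
        | inn =>
          rw [if_neg (by decide)]
          exact (prefix_aux att Lab1 Lab MM1 had1 hmm1 hsub1 f hf1 x).1 hl hl1
        | out =>
          rcases (hin x).1 hl with h | h
          · rw [hl1] at h; exact absurd h (by simp)
          · exact absurd ⟨hl1, h⟩ (hnc x).2
      · cases hl2 : Lab2 x with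
        | und => simp [hl2]
        | inn =>
          rw [if_neg (by decide)]
          exact (prefix_aux att Lab2 Lab MM2 had2 hmm2 hsub2 f hf2 x).1 hl hl2
        | out =>
          rcases (hin x).1 hl with h | h
          · exact absurd ⟨h, hl2⟩ (hnc x).1
          · rw [hl2] at h; exact absurd h (by simp)
    | out =>
      rw [if_neg (by decide), if_pos rfl, hfdef]
      apply le_min
      · cases hl1 : Lab1 x with
        | und => simp [hl1]
        | out =>
          rw [if_neg (by decide)]
          exact (prefix_aux att Lab1 Lab MM1 had1 hmm1 hsub1 f hf1 x).2 hl hl1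
        | inn =>
          rcases (hout x).1 hl with h | h
          · rw [hl1] at h; exact absurd h (by simp)
          · exact absurd ⟨hl1, h⟩ (hnc x).1
      · cases hl2 : Lab2 x with
        | und => simp [hl2]
        | out =>
          rw [if_neg (by decide)]
          exact (prefix_aux att Lab2 Lab MM2 had2 hmm2 hsub2 f hf2 x).2 hl hl2
        | inn =>
          rcases (hout x).1 hl with h | h
          · exact absurd ⟨h, hl2⟩ (hnc x).2
          · rw [hl2] at h; exact absurd h (by simp)
  set ν : Ar → ℕ∞ := OrderHom.lfp F with hν
  have hle : ∀ x, ν x ≤ f x := fun x => OrderHom.lfp_le F hpre x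
  have hfix : ∀ x, ν x = F ν x := fun x => (congrFun (OrderHom.map_lfp F) x).symm
  have hfin : ∀ x, Lab x ≠ Label.und → ν x ≠ ⊤ := by
    intro x hx
    have hfx : f x ≠ ⊤ := by
      cases hl : Lab x with
      | und => exact absurd hl hx
      | inn =>
        rcases (hin x).1 hl with h | h
        · exact ne_top_of_le_ne_top (ENat.coe_ne_top (MM1 x)) (hf1 x (by simp [h]))
        · exact ne_top_of_le_ne_top (ENat.coe_ne_top (MM2 x)) (hf2 x (by simp [h]))
      | out =>
        rcases (hout x).1 hl with h | h
        · exact ne_top_of_le_ne_top (ENat.coe_ne_top (MM1 x)) (hf1 x (by simp [h]))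
        · exact ne_top_of_le_ne_top (ENat.coe_ne_top (MM2 x)) (hf2 x (by simp [h]))
    exact ne_top_of_le_ne_top hfx (hle x)
  refine ⟨fun x => (ν x).toNat, ?_, ?_⟩
  · intro x hx
    have heq := hfix x
    rw [hFapp, if_pos hx] at heq
    have hgS : ∀ y ∈ {y | att y x ∧ Lab y = Label.out}, ν y ≠ ⊤ :=
      fun y hy => hfin y (by simp [hy.2])
    rw [enat_sSup_image ν _ hgS] at heq
    have heq2 : ν x = ((sSup ((fun y => (ν y).toNat) '' {y | att y x ∧ Lab y = Label.out}) + 1 : ℕ) : ℕ∞) := by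
      rw [heq]; push_cast; ring
    show (ν x).toNat = _
    rw [heq2, ENat.toNat_coe]
  · intro x hx
    have heq := hfix x
    rw [hFapp, if_neg (by simp [hx]), if_pos hx] at heq
    obtain ⟨y, hya, hyi⟩ := hadm.2 x hx
    have hSne : ({y | att y x ∧ Lab y = Label.inn} : Set Ar).Nonempty := ⟨y, hya, hyi⟩
    have hgS : ∀ y ∈ {y | att y x ∧ Lab y = Label.inn}, ν y ≠ ⊤ :=
      fun y hy => hfin y (by simp [hy.2])
    rw [enat_sInf_image ν _ hSne hgS] at heq
    have heq2 : ν x = ((sInf ((fun y => (ν y).toNat) '' {y | att y x ∧ Lab y = Label.inn}) + 1 : ℕ) : ℕ∞) := by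
      rw [heq]; push_cast; ring
    show (ν x).toNat = _
    rw [heq2, ENat.toNat_coe]
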